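/- arXiv:math/0309325 — 2 statements merged into one kernel-verified Lean document; each statement's English description precedes it below -/
import Mathlib

section
/- Fix i in Z/3. Every star decomposable word w on the seven letters a_i, b_i, c_i, d_i, x_i, b_{i-1}, d_{i-1} is ~-equivalent to a concatenation of words from the ten-element set {a_i, b_i, c_i, d_i, x_i, b_{i-1} a_i d_{i-1}, b_{i-1} b_i d_{i-1}, b_{i-1} c_i d_{i-1}, b_{i-1} d_i d_{i-1}, b_{i-1} x_i d_{i-1}}. -/
/-- The 15-letter alphabet A = {a_i, b_i, c_i, d_i, x_i : i ∈ ℤ/3}. -/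
inductive Letter : Type
  | a : ZMod 3 → Letter
  | b : ZMod 3 → Letter
  | c : ZMod 3 → Letter
  | d : ZMod 3 → Letter
  | x : ZMod 3 → Letter
  deriving DecidableEq

/-- Words: the free monoid on the alphabet A. -/
abbrev Word := FreeMonoid Letter

def a (i : ZMod 3) : Word := FreeMonoid.of (Letter.a i)
def b (i : ZMod 3) : Word := FreeMonoid.of (Letter.b i)
def c (i : ZMod 3) : Word := FreeMonoid.of (Letter.c i)
def d (i : ZMod 3) : Word := FreeMonoid.of (Letter.d i)
def x (i : ZMod 3) : Word := FreeMonoid.of (Letter.x i)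

/-- t_i = b_{i+1} d_{i-1} d_{i+1} b_{i-1}. -/
def t (i : ZMod 3) : Word := b (i+1) * d (i-1) * d (i+1) * b (i-1)

/-- t'_i = d_{i-1} b_{i+1} b_{i-1} d_{i+1}. -/
def t' (i : ZMod 3) : Word := d (i-1) * b (i+1) * b (i-1) * d (i+1)

/-- The defining relations (1)-(10) of the semigroup SK. -/
inductive SKRel : Word → Word → Prop
  | r1a (i : ZMod 3) : SKRel (a i) (a (i+1) * d (i-1))
  | r1b (i : ZMod 3) : SKRel (b i) (a (i-1) * c (i+1))
  | r1c (i : ZMod 3) : SKRel (c i) (b (i-1) * c (i+1))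
  | r1d (i : ZMod 3) : SKRel (d i) (a (i+1) * c (i-1))
  | r2 (i : ZMod 3) : SKRel (x i) (d (i+1) * x (i-1) * b (i+1))
  | r3 : SKRel (d 0 * d 1 * d 2) 1
  | r4bd (i : ZMod 3) : SKRel (b i * d i) 1
  | r4db (i : ZMod 3) : SKRel (d i * b i) 1
  | r5d (i : ZMod 3) : SKRel (d i * x i * d i) (a i * (d i * x i * d i) * c i)
  | r5b (i : ZMod 3) : SKRel (b i * x i * b i) (a i * (b i * x i * b i) * c i)
  | r6 (i : ZMod 3) :
      SKRel (x i * (d (i+1) * d i * d (i-1))) ((d (i+1) * d i * d (i-1)) * x i)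
  | r7 (i : ZMod 3) (w : Word)
      (hw : w ∈ ({c (i+1), x (i+1), b i * d (i+1) * d i} : Set Word)) :
      SKRel ((d i * c i) * w) (w * (d i * c i))
  | r8 (i : ZMod 3) (w : Word)
      (hw : w ∈ ({a (i+1), b (i+1), c (i+1), x (i+1), b i * d (i+1) * d i} : Set Word)) :
      SKRel ((a i * b i) * w) (w * (a i * b i))
  | r9 (i : ZMod 3) (w : Word)
      (hw : w ∈ ({a i, b i, c i, x i, b (i-1) * d i * d (i-1)} : Set Word)) :
      SKRel (t i * w) (w * t i)
  | r10 (i : ZMod 3) (w : Word)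
      (hw : w ∈ ({a (i+1), b (i+1), c (i+1), x (i+1), b i * d (i+1) * d i} : Set Word)) :
      SKRel ((d i * x i * b i) * w) (w * (d i * x i * b i))

/-- The congruence generated by relations (1)-(10); `skCon u v` means u ~ v,
i.e. u and v have equal images in the presented monoid SK. -/
def skCon : Con Word := conGen SKRel

/-- The encoding μ for words on the seven letters a_i, b_i, c_i, d_i, x_i, b_{i-1}, d_{i-1}:
a_i, b_i, c_i, d_i, x_i ↦ '•' (= 0), b_{i-1} ↦ '(' (= 1), d_{i-1} ↦ ')' (= -1). -/
def mu (i : ZMod 3) : Letter → List ℤ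
  | .b j => if j = i - 1 then [1] else [0]
  | .d j => if j = i - 1 then [-1] else [0]
  | _ => [0]

def muList (i : ZMod 3) (w : Word) : List ℤ :=
  ((FreeMonoid.toList w).map (mu i)).flatten

/-- The star of depth k: k left brackets, a bullet, k right brackets. -/
def star (k : ℕ) : List ℤ := List.replicate k 1 ++ [0] ++ List.replicate k (-1)

/-- A word is star decomposable if its encoding is a concatenation of stars. -/
def StarDecomposable (i : ZMod 3) (w : Word) : Prop :=
  ∃ ks : List ℕ, muList i w = (ks.map star).flatten

/-- The depth of a word: the maximal bracket difference over all prefixes of μ(w). -/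
def depth (i : ZMod 3) (w : Word) : ℤ :=
  ((muList i w).inits.map List.sum).foldr max 0

/-- The word uses only the seven letters a_i, b_i, c_i, d_i, x_i, b_{i-1}, d_{i-1}. -/
def OnSeven (i : ZMod 3) (w : Word) : Prop :=
  ∀ l ∈ FreeMonoid.toList w,
    l ∈ ({Letter.a i, Letter.b i, Letter.c i, Letter.d i, Letter.x i,
          Letter.b (i-1), Letter.d (i-1)} : Set Letter)

/-! Conjugation `ψ : z ↦ b_{i-1} z d_{i-1}` is an automorphism of `SK`, because `d_{i-1}` is a
unit with inverse `b_{i-1}`, and a star of depth `k` with centre `y` represents `ψ^k y`. So it is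
enough that the submonoid generated by the five letters `y` and their conjugates `ψ y` is
`ψ`-stable, i.e. that it contains `ψ² y` for each letter `y`.

For `d_i` and `b_i` this is an identity in the group generated by `d_{i-1}` and `d_i`
(`d_{i+1} = b_i b_{i-1}`) which follows from `t_{i+1}` commuting with `d_{i+1}`. The letters `a_i`
and `c_i` reduce to these: `a_i = (a_{i+1} b_{i+1}) b_i` and `c_i = d_i (d_{i+1} c_{i+1})`, where
the bracketed factors commute with `d_{i-1}`. Finally `x_i` commutes with the unit
`b_i d_{i+1} d_i t_i`, and conjugating by it yields the identity for `x_i`, using that `t_{i-1}`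
commutes with `d_{i-1}`. -/

open ConjAct Pointwise

lemma ZMod.three_add_one_add_one (j : ZMod 3) : j + 1 + 1 = j - 1 := by
  revert j; decide

lemma ZMod.three_sub_one_sub_one (j : ZMod 3) : j - 1 - 1 = j + 1 := by
  revert j; decide

lemma ZMod.three_ne_sub_one (j : ZMod 3) : j ≠ j - 1 := by
  revert j; decide

lemma FreeMonoid.ofList_replicate {α : Type*} (n : ℕ) (l : α) :
    FreeMonoid.ofList (List.replicate n l) = FreeMonoid.of l ^ n := by
  induction n with
  | zero => rfl
  | succ n ih => rw [List.replicate_succ, FreeMonoid.ofList_cons, ih, pow_succ']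

lemma Commute.units_conj_mul_inv {M : Type*} [Monoid M] {z : M} {g : Mˣ}
    (h : Commute z g) (u : Mˣ) : ↑(u * g⁻¹) * z * ↑(u * g⁻¹)⁻¹ = ↑u * z * ↑u⁻¹ := by
  simp only [mul_inv_rev, inv_inv, Units.val_mul, mul_assoc]
  rw [← mul_assoc z, h.eq, mul_assoc, Units.inv_mul_cancel_left]

abbrev SK : Type := skCon.Quotient

def toSK : Word →* SK := skCon.mk'

lemma toSK_eq_iff {u v : Word} : toSK u = toSK v ↔ skCon u v := skCon.eq

lemma toSK_eq_of_skRel {u v : Word} (h : SKRel u v) : toSK u = toSK v :=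
  toSK_eq_iff.mpr (ConGen.Rel.of u v h)

def δ (j : ZMod 3) : SKˣ where
  val := toSK (d j)
  inv := toSK (b j)
  val_inv := by rw [← map_mul, toSK_eq_of_skRel (.r4db j), map_one]
  inv_val := by rw [← map_mul, toSK_eq_of_skRel (.r4bd j), map_one]

@[simp] lemma toSK_d (j : ZMod 3) : toSK (d j) = δ j := rfl

@[simp] lemma toSK_b (j : ZMod 3) : toSK (b j) = ↑(δ j)⁻¹ := rfl

lemma δ_mul_δ_mul_δ (j : ZMod 3) : δ j * δ (j + 1) * δ (j - 1) = 1 := by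
  have h : δ 0 * δ 1 * δ 2 = 1 := Units.ext <| by
    simpa using toSK_eq_of_skRel SKRel.r3
  have h2 : δ 2 = (δ 0 * δ 1)⁻¹ := eq_inv_of_mul_eq_one_right h
  fin_cases j
  · exact h
  · change δ 1 * δ 2 * δ 0 = 1
    rw [h2]; group
  · change δ 2 * δ 0 * δ 1 = 1
    rw [h2]; group

lemma δ_add_one (j : ZMod 3) : δ (j + 1) = (δ j)⁻¹ * (δ (j - 1))⁻¹ := by
  rw [← mul_inv_rev, eq_inv_iff_mul_eq_one, ← mul_assoc]
  simpa [ZMod.three_add_one_add_one] using δ_mul_δ_mul_δ (j + 1)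

lemma δ_sub_one (j : ZMod 3) : δ (j - 1) = (δ (j + 1))⁻¹ * (δ j)⁻¹ := by
  rw [← mul_inv_rev, eq_inv_iff_mul_eq_one, ← mul_assoc]
  simpa [ZMod.three_sub_one_sub_one] using δ_mul_δ_mul_δ (j - 1)

def τ (j : ZMod 3) : SKˣ := (δ (j + 1))⁻¹ * δ (j - 1) * δ (j + 1) * (δ (j - 1))⁻¹

@[simp] lemma toSK_t (j : ZMod 3) : toSK (t j) = τ j := by
  simp [t, τ]

lemma commute_τ_δ (j : ZMod 3) : Commute (τ j) (δ j) := by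
  have h := toSK_eq_of_skRel (SKRel.r9 j (b j) (by simp))
  simp only [map_mul, toSK_t, toSK_b] at h
  exact Commute.units_val_iff.mp (Commute.units_inv_right_iff.mp h)

lemma δ_conj_sq (i : ZMod 3) :
    (δ (i - 1))⁻¹ ^ 2 * δ i * δ (i - 1) ^ 2 =
      δ i * ((δ (i - 1))⁻¹ * δ i * δ (i - 1)) * (δ i)⁻¹ ^ 2 *
        ((δ (i - 1))⁻¹ * δ i * δ (i - 1)) := by
  have hc := (commute_τ_δ (i + 1)).eq
  simp only [τ, ZMod.three_add_one_add_one, add_sub_cancel_right, δ_add_one i] at hc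
  generalize δ (i - 1) = P at hc ⊢
  generalize δ i = Q at hc ⊢
  calc P⁻¹ ^ 2 * Q * P ^ 2 = Q * (Q⁻¹ * P⁻¹ * (P⁻¹ * Q * P * Q⁻¹)) * (Q * P) := by
        simp [pow_two, mul_assoc]
    _ = Q * (P⁻¹ * Q * P * Q⁻¹ * (Q⁻¹ * P⁻¹)) * (Q * P) := by rw [← hc]
    _ = Q * (P⁻¹ * Q * P) * Q⁻¹ ^ 2 * (P⁻¹ * Q * P) := by simp [pow_two, mul_assoc]

lemma δ_conj_sq_inv (i : ZMod 3) :
    (δ (i - 1))⁻¹ ^ 2 * (δ i)⁻¹ * δ (i - 1) ^ 2 =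
      (δ (i - 1))⁻¹ * (δ i)⁻¹ * δ (i - 1) * δ i ^ 2 * ((δ (i - 1))⁻¹ * (δ i)⁻¹ * δ (i - 1)) *
        (δ i)⁻¹ := by
  have h := δ_conj_sq i
  generalize δ (i - 1) = P at h ⊢
  generalize δ i = Q at h ⊢
  calc P⁻¹ ^ 2 * Q⁻¹ * P ^ 2 = (P⁻¹ ^ 2 * Q * P ^ 2)⁻¹ := by simp [pow_two, mul_assoc]
    _ = (Q * (P⁻¹ * Q * P) * Q⁻¹ ^ 2 * (P⁻¹ * Q * P))⁻¹ := by rw [h]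
    _ = P⁻¹ * Q⁻¹ * P * Q ^ 2 * (P⁻¹ * Q⁻¹ * P) * Q⁻¹ := by simp [pow_two, mul_assoc]

lemma δ_conj_x (i : ZMod 3) :
    (δ (i - 1))⁻¹ ^ 2 * ((δ i)⁻¹ * δ (i + 1) * δ i * τ i)⁻¹ =
      (δ (i - 1))⁻¹ * (δ i)⁻¹ * δ (i - 1) * δ i ^ 2 * (δ (i - 1))⁻¹ := by
  have hc := (commute_τ_δ (i - 1)).eq
  simp only [τ, ZMod.three_sub_one_sub_one, sub_add_cancel, δ_add_one i] at hc
  simp only [τ, δ_add_one i]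
  generalize δ (i - 1) = P at hc ⊢
  generalize δ i = Q at hc ⊢
  calc _ = Q * (Q⁻¹ * (Q⁻¹ * P⁻¹) * Q * (Q⁻¹ * P⁻¹)⁻¹ * P)⁻¹ := by simp [pow_two, mul_assoc]
    _ = Q * (P * (Q⁻¹ * (Q⁻¹ * P⁻¹) * Q * (Q⁻¹ * P⁻¹)⁻¹))⁻¹ := by rw [hc]
    _ = P⁻¹ * Q⁻¹ * P * Q ^ 2 * P⁻¹ := by simp [pow_two, mul_assoc]

lemma toSK_a (i : ZMod 3) : toSK (a i) = toSK (a (i + 1) * b (i + 1)) * ↑(δ i)⁻¹ := by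
  rw [toSK_eq_of_skRel (.r1a i)]
  simp [δ_sub_one i, mul_assoc]

lemma commute_ab_δ (i : ZMod 3) : Commute (toSK (a (i + 1) * b (i + 1))) (δ (i - 1) : SK) := by
  have h := toSK_eq_of_skRel (SKRel.r8 (i + 1) (b (i + 1 + 1)) (by simp))
  rw [ZMod.three_add_one_add_one, map_mul, map_mul toSK (b (i - 1)), toSK_b] at h
  exact Commute.units_inv_right_iff.mp h

lemma toSK_c (i : ZMod 3) : toSK (c i) = δ i * toSK (d (i + 1) * c (i + 1)) := by
  rw [toSK_eq_of_skRel (.r1c i)]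
  simp [δ_sub_one i, mul_assoc]

lemma commute_dc_δ (i : ZMod 3) : Commute (toSK (d (i + 1) * c (i + 1))) (δ (i - 1) : SK) := by
  have hεδ : Commute (toSK (a i * b i)) (δ (i + 1) : SK) := by
    have h := toSK_eq_of_skRel (SKRel.r8 i (b (i + 1)) (by simp))
    rw [map_mul, map_mul toSK (b (i + 1)), toSK_b] at h
    exact Commute.units_inv_right_iff.mp h
  have hεc : Commute (toSK (a i * b i)) (toSK (c (i + 1))) := by
    have h := toSK_eq_of_skRel (SKRel.r8 i (c (i + 1)) (by simp))
    rwa [map_mul, map_mul toSK (c (i + 1))] at h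
  have hγc : Commute (toSK (d (i + 1) * c (i + 1))) (toSK (c (i - 1))) := by
    have h := toSK_eq_of_skRel (SKRel.r7 (i + 1) (c (i + 1 + 1)) (by simp))
    rwa [ZMod.three_add_one_add_one, map_mul, map_mul toSK (c (i - 1))] at h
  have hδ : (δ (i - 1) : SK) = toSK (a i * b i) * toSK (c (i - 1)) := by
    have h1 := toSK_eq_of_skRel (SKRel.r1d (i - 1))
    have h2 := toSK_eq_of_skRel (SKRel.r1c (i + 1))
    simp only [sub_add_cancel, ZMod.three_sub_one_sub_one, add_sub_cancel_right,
      ZMod.three_add_one_add_one, map_mul] at h1 h2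
    rw [← toSK_d, h1, h2, map_mul, mul_assoc]
  rw [hδ]
  refine Commute.mul_right ?_ hγc
  rw [map_mul toSK (d (i + 1)), toSK_d]
  exact (hεδ.mul_right hεc).symm

lemma commute_x_τ (i : ZMod 3) : Commute (toSK (x i)) (τ i : SK) := by
  have h := toSK_eq_of_skRel (SKRel.r9 i (x i) (by simp))
  rw [map_mul, map_mul toSK (x i), toSK_t] at h
  exact h.symm

lemma commute_x_δ_conj (i : ZMod 3) :
    Commute (toSK (x i)) ↑((δ i)⁻¹ * δ (i + 1) * δ i) := by
  have h := toSK_eq_of_skRel (SKRel.r10 i (b (i + 1)) (by simp))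
  rw [map_mul, map_mul toSK (b (i + 1)), toSK_b] at h
  have h' := (Commute.units_inv_right_iff.mp h).map
    (MulDistribMulAction.toMonoidHom SK (toConjAct (δ i)⁻¹))
  simpa [units_smul_def, mul_assoc] using h'

def ψ (i : ZMod 3) : ConjAct SKˣ := toConjAct (δ (i - 1))⁻¹

lemma ψ_smul (i : ZMod 3) (z : SK) : ψ i • z = ↑(δ (i - 1))⁻¹ * z * δ (i - 1) := by
  simp [ψ, units_smul_def]

lemma ψ_smul_units (i : ZMod 3) (u : SKˣ) :
    ψ i • (u : SK) = ↑((δ (i - 1))⁻¹ * u * δ (i - 1)) := by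
  simp [ψ_smul]

lemma ψ_sq_smul (i : ZMod 3) (z : SK) :
    ψ i ^ 2 • z = ↑((δ (i - 1))⁻¹ ^ 2) * z * ↑(δ (i - 1) ^ 2) := by
  simp [ψ, units_smul_def]

lemma ψ_smul_of_commute {i : ZMod 3} {z : SK} (h : Commute z ↑(δ (i - 1))) : ψ i • z = z := by
  rw [ψ_smul, mul_assoc, h.eq, Units.inv_mul_cancel_left]

lemma ψ_sq_smul_δ (i : ZMod 3) :
    ψ i ^ 2 • (δ i : SK) =
      δ i * ψ i • (δ i : SK) * ↑(δ i)⁻¹ * ↑(δ i)⁻¹ * ψ i • (δ i : SK) := by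
  rw [ψ_sq_smul]
  simpa [ψ_smul_units, pow_two, mul_assoc] using congrArg Units.val (δ_conj_sq i)

lemma ψ_sq_smul_δ_inv (i : ZMod 3) :
    ψ i ^ 2 • (↑(δ i)⁻¹ : SK) =
      ψ i • (↑(δ i)⁻¹ : SK) * δ i * δ i * ψ i • (↑(δ i)⁻¹ : SK) * ↑(δ i)⁻¹ := by
  rw [ψ_sq_smul]
  simpa [ψ_smul_units, pow_two, mul_assoc] using congrArg Units.val (δ_conj_sq_inv i)

lemma ψ_sq_smul_a (i : ZMod 3) :
    ψ i ^ 2 • toSK (a i) =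
      ψ i • toSK (a i) * δ i * δ i * ψ i • (↑(δ i)⁻¹ : SK) * ↑(δ i)⁻¹ := by
  have hα : ψ i • toSK (a (i + 1) * b (i + 1)) = toSK (a (i + 1) * b (i + 1)) :=
    ψ_smul_of_commute (commute_ab_δ i)
  have hα2 : ψ i ^ 2 • toSK (a (i + 1) * b (i + 1)) = toSK (a (i + 1) * b (i + 1)) := by
    rw [pow_two, mul_smul, hα, hα]
  rw [toSK_a, smul_mul', smul_mul', hα, hα2, ψ_sq_smul_δ_inv]
  simp only [mul_assoc]

lemma ψ_sq_smul_c (i : ZMod 3) :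
    ψ i ^ 2 • toSK (c i) =
      δ i * ψ i • (δ i : SK) * ↑(δ i)⁻¹ * ↑(δ i)⁻¹ * ψ i • toSK (c i) := by
  have hγ : ψ i • toSK (d (i + 1) * c (i + 1)) = toSK (d (i + 1) * c (i + 1)) :=
    ψ_smul_of_commute (commute_dc_δ i)
  have hγ2 : ψ i ^ 2 • toSK (d (i + 1) * c (i + 1)) = toSK (d (i + 1) * c (i + 1)) := by
    rw [pow_two, mul_smul, hγ, hγ]
  rw [toSK_c, smul_mul', smul_mul', hγ, hγ2, ψ_sq_smul_δ]
  simp only [mul_assoc]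

lemma ψ_sq_smul_x (i : ZMod 3) :
    ψ i ^ 2 • toSK (x i) =
      ψ i • (↑(δ i)⁻¹ : SK) * δ i * δ i * ψ i • toSK (x i) * ↑(δ i)⁻¹ * ↑(δ i)⁻¹ *
        ψ i • (δ i : SK) := by
  have hg := (commute_x_δ_conj i).mul_right (commute_x_τ i)
  rw [← Units.val_mul] at hg
  calc ψ i ^ 2 • toSK (x i)
      = ↑((δ (i - 1))⁻¹ ^ 2 * ((δ i)⁻¹ * δ (i + 1) * δ i * τ i)⁻¹) * toSK (x i) *
          ↑((δ (i - 1))⁻¹ ^ 2 * ((δ i)⁻¹ * δ (i + 1) * δ i * τ i)⁻¹)⁻¹ := by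
        rw [hg.units_conj_mul_inv, ψ_sq_smul, inv_pow, inv_inv]
    _ = _ := by
        rw [δ_conj_x]
        simp [ψ_smul, pow_two, mul_assoc]

def letterWords (i : ZMod 3) : Set Word := {a i, b i, c i, d i, x i}

def starGenerators (i : ZMod 3) : Set Word :=
  {a i, b i, c i, d i, x i,
    b (i-1) * a i * d (i-1), b (i-1) * b i * d (i-1),
    b (i-1) * c i * d (i-1), b (i-1) * d i * d (i-1),
    b (i-1) * x i * d (i-1)}

lemma starGenerators_eq (i : ZMod 3) :
    starGenerators i = letterWords i ∪ (fun y => b (i - 1) * y * d (i - 1)) '' letterWords i := by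
  simp only [starGenerators, letterWords, Set.image_insert_eq, Set.image_singleton,
    Set.insert_union, Set.singleton_union]

def starSubmonoid (i : ZMod 3) : Submonoid SK := Submonoid.closure (toSK '' starGenerators i)

lemma ψ_pow_smul_toSK (i : ZMod 3) (k : ℕ) (y : Word) :
    ψ i ^ k • toSK y = toSK (b (i - 1) ^ k * y * d (i - 1) ^ k) := by
  simp [ψ, units_smul_def]

lemma ψ_smul_toSK (i : ZMod 3) (y : Word) :
    ψ i • toSK y = toSK (b (i - 1) * y * d (i - 1)) := by
  simpa using ψ_pow_smul_toSK i 1 y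

lemma toSK_mem_starSubmonoid {i : ZMod 3} {y : Word} (hy : y ∈ letterWords i) :
    toSK y ∈ starSubmonoid i :=
  Submonoid.subset_closure ⟨y, starGenerators_eq i ▸ Or.inl hy, rfl⟩

lemma ψ_smul_toSK_mem_starSubmonoid {i : ZMod 3} {y : Word} (hy : y ∈ letterWords i) :
    ψ i • toSK y ∈ starSubmonoid i :=
  ψ_smul_toSK i y ▸ Submonoid.subset_closure ⟨_, starGenerators_eq i ▸ Or.inr ⟨y, hy, rfl⟩, rfl⟩

lemma ψ_sq_smul_mem {i : ZMod 3} {y : Word} (hy : y ∈ letterWords i) :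
    ψ i ^ 2 • toSK y ∈ starSubmonoid i := by
  simp only [letterWords, Set.mem_insert_iff, Set.mem_singleton_iff] at hy
  rcases hy with rfl | rfl | rfl | rfl | rfl <;>
    simp only [toSK_b, toSK_d, ψ_sq_smul_a, ψ_sq_smul_δ_inv, ψ_sq_smul_c, ψ_sq_smul_δ,
      ψ_sq_smul_x] <;>
    simp only [← toSK_b, ← toSK_d] <;>
    repeat' with_reducible apply Submonoid.mul_mem
  all_goals
    first
      | with_reducible apply toSK_mem_starSubmonoid
      | with_reducible apply ψ_smul_toSK_mem_starSubmonoid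
    simp [letterWords]

lemma smul_starSubmonoid_le (i : ZMod 3) : ψ i • starSubmonoid i ≤ starSubmonoid i := by
  change ψ i • Submonoid.closure _ ≤ _
  rw [Submonoid.smul_closure, Submonoid.closure_le]
  rintro _ ⟨_, ⟨y, hy, rfl⟩, rfl⟩
  rw [starGenerators_eq] at hy
  rcases hy with hy | ⟨z, hz, rfl⟩
  · exact ψ_smul_toSK_mem_starSubmonoid hy
  · dsimp only
    rw [← ψ_smul_toSK, ← mul_smul, ← pow_two]
    exact ψ_sq_smul_mem hz

lemma ψ_pow_smul_mem {i : ZMod 3} {y : Word} (hy : y ∈ letterWords i) (n : ℕ) :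
    ψ i ^ n • toSK y ∈ starSubmonoid i := by
  induction n with
  | zero => simpa using toSK_mem_starSubmonoid hy
  | succ n ih =>
    rw [pow_succ', mul_smul]
    exact smul_starSubmonoid_le i (Submonoid.smul_mem_pointwise_smul _ _ _ ih)

def bracket (i : ZMod 3) : Letter → ℤ
  | .b j => if j = i - 1 then 1 else 0
  | .d j => if j = i - 1 then -1 else 0
  | _ => 0

lemma muList_eq_map_bracket (i : ZMod 3) (w : Word) :
    muList i w = (FreeMonoid.toList w).map (bracket i) := by
  have hmu : mu i = fun l => [bracket i l] := by
    funext l; cases l <;> simp only [mu, bracket] <;> split_ifs <;> rfl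
  rw [muList, hmu]
  induction FreeMonoid.toList w <;> simp [*]

def sevenLetters (i : ZMod 3) : Set Letter :=
  {Letter.a i, Letter.b i, Letter.c i, Letter.d i, Letter.x i, Letter.b (i-1), Letter.d (i-1)}

lemma eq_b_of_bracket_eq_one {i : ZMod 3} {l : Letter} (hl : l ∈ sevenLetters i)
    (h : bracket i l = 1) : l = .b (i - 1) := by
  simp only [sevenLetters, Set.mem_insert_iff, Set.mem_singleton_iff] at hl
  rcases hl with rfl | rfl | rfl | rfl | rfl | rfl | rfl <;>
    simp [bracket, ZMod.three_ne_sub_one] at h ⊢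

lemma eq_d_of_bracket_eq_neg_one {i : ZMod 3} {l : Letter} (hl : l ∈ sevenLetters i)
    (h : bracket i l = -1) : l = .d (i - 1) := by
  simp only [sevenLetters, Set.mem_insert_iff, Set.mem_singleton_iff] at hl
  rcases hl with rfl | rfl | rfl | rfl | rfl | rfl | rfl <;>
    simp [bracket, ZMod.three_ne_sub_one] at h ⊢

lemma of_mem_letterWords_of_bracket_eq_zero {i : ZMod 3} {l : Letter}
    (hl : l ∈ sevenLetters i) (h : bracket i l = 0) : FreeMonoid.of l ∈ letterWords i := by
  simp only [sevenLetters, Set.mem_insert_iff, Set.mem_singleton_iff] at hl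
  rcases hl with rfl | rfl | rfl | rfl | rfl | rfl | rfl <;>
    simp [bracket, letterWords, ZMod.three_ne_sub_one, a, b, c, d, x] at h ⊢

lemma toSK_ofList_mem_of_map_bracket_eq_star {i : ZMod 3} {L : List Letter}
    (hL : ∀ l ∈ L, l ∈ sevenLetters i) {k : ℕ} (h : L.map (bracket i) = _root_.star k) :
    toSK (FreeMonoid.ofList L) ∈ starSubmonoid i := by
  obtain ⟨L₁₂, L₃, rfl, h₁₂, h₃⟩ := List.map_eq_append_iff.mp h
  obtain ⟨L₁, L₂, rfl, h₁, h₂⟩ := List.map_eq_append_iff.mp h₁₂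
  obtain ⟨y, rfl, hy₀⟩ := List.map_eq_singleton_iff.mp h₂
  have hL₁ : L₁ = List.replicate k (.b (i - 1)) := by
    refine List.eq_replicate_iff.mpr ⟨by simpa using congrArg List.length h₁, fun l hl => ?_⟩
    exact eq_b_of_bracket_eq_one (hL l (by simp [hl]))
      ((List.eq_replicate_iff.mp h₁).2 _ (List.mem_map_of_mem hl))
  have hL₃ : L₃ = List.replicate k (.d (i - 1)) := by
    refine List.eq_replicate_iff.mpr ⟨by simpa using congrArg List.length h₃, fun l hl => ?_⟩
    exact eq_d_of_bracket_eq_neg_one (hL l (by simp [hl]))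
      ((List.eq_replicate_iff.mp h₃).2 _ (List.mem_map_of_mem hl))
  have hy : FreeMonoid.of y ∈ letterWords i :=
    of_mem_letterWords_of_bracket_eq_zero (hL y (by simp)) hy₀
  rw [hL₁, hL₃, FreeMonoid.ofList_append, FreeMonoid.ofList_append, FreeMonoid.ofList_replicate,
    FreeMonoid.ofList_replicate, FreeMonoid.ofList_singleton]
  exact ψ_pow_smul_toSK i k _ ▸ ψ_pow_smul_mem hy k

lemma toSK_ofList_mem_of_map_bracket_eq {i : ZMod 3} (ks : List ℕ) {L : List Letter}
    (hL : ∀ l ∈ L, l ∈ sevenLetters i) (h : L.map (bracket i) = (ks.map _root_.star).flatten) :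
    toSK (FreeMonoid.ofList L) ∈ starSubmonoid i := by
  induction ks generalizing L with
  | nil =>
    obtain rfl : L = [] := by simpa using h
    exact Submonoid.one_mem _
  | cons k ks ih =>
    obtain ⟨L₁, L₂, rfl, h₁, h₂⟩ := List.map_eq_append_iff.mp h
    rw [FreeMonoid.ofList_append, map_mul]
    exact Submonoid.mul_mem _
      (toSK_ofList_mem_of_map_bracket_eq_star (fun l hl => hL l (by simp [hl])) h₁)
      (ih (fun l hl => hL l (by simp [hl])) h₂)

/-- Claim 4: every star decomposable word on the seven letters is equivalent to
a concatenation of words from the set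
{a_i, b_i, c_i, d_i, x_i, b_{i-1} a_i d_{i-1}, b_{i-1} b_i d_{i-1},
 b_{i-1} c_i d_{i-1}, b_{i-1} d_i d_{i-1}, b_{i-1} x_i d_{i-1}}. -/
theorem claim4 (i : ZMod 3) : ∀ w : Word, OnSeven i w → StarDecomposable i w →
    ∃ ws : List Word,
      (∀ u ∈ ws,
        u ∈ ({a i, b i, c i, d i, x i,
              b (i-1) * a i * d (i-1), b (i-1) * b i * d (i-1),
              b (i-1) * c i * d (i-1), b (i-1) * d i * d (i-1),
              b (i-1) * x i * d (i-1)} : Set Word)) ∧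
      skCon w ws.prod := by
  rintro w hw ⟨ks, hks⟩
  have hmem : toSK w ∈ starSubmonoid i := by
    rw [← FreeMonoid.ofList_toList w]
    exact toSK_ofList_mem_of_map_bracket_eq ks hw (by rwa [← muList_eq_map_bracket])
  rw [starSubmonoid, ← MonoidHom.map_mclosure] at hmem
  obtain ⟨w', hw', hw'w⟩ := Submonoid.mem_map.mp hmem
  obtain ⟨ws, hws, rfl⟩ := Submonoid.exists_list_of_mem_closure hw'
  exact ⟨ws, hws, toSK_eq_iff.mp hw'w.symm⟩
end

section
/- Let U_l denote any of the five words Xi_l, Eta_l, Sig_l, SigInv_l, Tau_l. Then the following equivalences hold in SK for all integers k, l >= 1: (phi-11) Xi_k U_l ~ U_{l+2} Xi_k whenever l >= k; (phi-12) Eta_k U_l ~ U_{l-2} Eta_k whenever l >= k+2; (phi-13) Sig_k U_l ~ U_l Sig_k whenever l >= k+2; (phi-14) Tau_k U_l ~ U_l Tau_k whenever l >= k+2. -/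
/-- φ(ξ_k) = d_2^k c_2 b_2^{k-1}. -/
def Xi (k : ℕ) : Word := d 2 ^ k * c 2 * b 2 ^ (k-1)
/-- φ(η_k) = d_2^{k-1} a_2 b_2^k. -/
def Eta (k : ℕ) : Word := d 2 ^ (k-1) * a 2 * b 2 ^ k
/-- φ(σ_k) = d_2^{k-1} b_1 d_2 d_1 b_2^k. -/
def Sig (k : ℕ) : Word := d 2 ^ (k-1) * b 1 * d 2 * d 1 * b 2 ^ k
/-- φ(σ_k^{-1}) = d_2^k b_1 b_2 d_1 b_2^{k-1}. -/
def SigInv (k : ℕ) : Word := d 2 ^ k * b 1 * b 2 * d 1 * b 2 ^ (k-1)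
/-- φ(τ_k) = d_2^k x_2 b_2^k. -/
def Tau (k : ℕ) : Word := d 2 ^ k * x 2 * b 2 ^ k

/-!
In SK the letter d₂ is a unit with inverse b₂, and each of the five families is a conjugate
`U (n + 1) ~ d₂ⁿ (U 1) b₂ⁿ`. Let `core` be the submonoid generated by a₀, c₀, x₀, d₀^{±1} and
(b₂d₀d₂)^{±1}. Relations (7)-(10) at the indices 2, 2, 0, 2 say that `U 1` commutes with a₀, b₀,
c₀, x₀ and b₂d₀d₂, hence with all of `core` (for `Xi 1 = d₂c₂` relation (7) gives only c₀, x₀,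
b₂d₀d₂, and a₀, d₀ are reached through a₁b₁, which commutes with d₂c₂ by (8)). Relations (1), (3)
and (7)-(10) at the remaining indices show that `core` is stable under the shift g ↦ b₂ g d₂.
Finally `V 1 = d₂ᵖ Z b₂^q` with Z ∈ core for V = Xi, Eta, Sig, Tau, where (p, q) = (2, 0), (0, 2),
(2, 2), (2, 2), so moving `V k` past `U l` only requires `U 1` to commute with a shifted copy
b₂ᵐ Z d₂ᵐ of Z, and it moves U by p - q levels.
-/

section UnitConjugation

variable {M : Type*} [Monoid M] (u : Mˣ)

theorem Units.conj_pow_add (y : M) (n m : ℕ) :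
    ↑(u ^ (n + m)) * y * ↑(u ^ (n + m))⁻¹ =
      ↑(u ^ n) * (↑(u ^ m) * y * ↑(u ^ m)⁻¹) * ↑(u ^ n)⁻¹ := by
  simp only [pow_add, mul_inv_rev, Units.val_mul, mul_assoc]

theorem Units.commute_conj_of_commute_inv_conj {y Z : M} (h : Commute y (↑u⁻¹ * Z * ↑u)) :
    Commute Z (↑u * y * ↑u⁻¹) :=
  calc Z * (↑u * y * ↑u⁻¹) = ↑u * ((↑u⁻¹ * Z * ↑u) * y) * ↑u⁻¹ := by
        simp only [mul_assoc, Units.mul_inv_cancel_left]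
    _ = ↑u * (y * (↑u⁻¹ * Z * ↑u)) * ↑u⁻¹ := by rw [h.eq]
    _ = ↑u * y * ↑u⁻¹ * Z := by simp only [mul_assoc, Units.mul_inv, mul_one]

theorem Units.conj_mul_conj_comm {y Z : M} {m : ℕ}
    (h : Commute y (↑(u ^ m)⁻¹ * Z * ↑(u ^ m))) (k a b : ℕ) :
    ↑(u ^ k) * (↑(u ^ a) * Z * ↑(u ^ b)⁻¹) * ↑(u ^ k)⁻¹ *
        (↑(u ^ (k + b + m)) * y * ↑(u ^ (k + b + m))⁻¹) =
      ↑(u ^ (k + a + m)) * y * ↑(u ^ (k + a + m))⁻¹ *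
        (↑(u ^ k) * (↑(u ^ a) * Z * ↑(u ^ b)⁻¹) * ↑(u ^ k)⁻¹) := by
  have hZ := (u ^ m).commute_conj_of_commute_inv_conj h
  rw [add_assoc k b, add_assoc k a, Units.conj_pow_add u y k, Units.conj_pow_add u y k,
    Units.conj_pow_add u y b, Units.conj_pow_add u y a]
  calc _ = ↑(u ^ k) * (↑(u ^ a) * (Z * (↑(u ^ m) * y * ↑(u ^ m)⁻¹)) * ↑(u ^ b)⁻¹) *
        ↑(u ^ k)⁻¹ := by
        simp only [mul_assoc, Units.inv_mul_cancel_left]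
    _ = ↑(u ^ k) * (↑(u ^ a) * (↑(u ^ m) * y * ↑(u ^ m)⁻¹ * Z) * ↑(u ^ b)⁻¹) *
        ↑(u ^ k)⁻¹ := by rw [hZ.eq]
    _ = _ := by simp only [mul_assoc, Units.inv_mul_cancel_left]

theorem Units.inv_conj_mem_closure {s : Set M}
    (hs : ∀ g ∈ s, ↑u⁻¹ * g * ↑u ∈ Submonoid.closure s) {g : M}
    (hg : g ∈ Submonoid.closure s) : ↑u⁻¹ * g * ↑u ∈ Submonoid.closure s := by
  induction hg using Submonoid.closure_induction with
  | mem g hg => exact hs g hg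
  | one => simp
  | mul g h _ _ hg hh => simpa only [mul_assoc, Units.mul_inv_cancel_left] using mul_mem hg hh

theorem Units.inv_conj_pow_mem_closure {s : Set M}
    (hs : ∀ g ∈ s, ↑u⁻¹ * g * ↑u ∈ Submonoid.closure s) {g : M}
    (hg : g ∈ Submonoid.closure s) (m : ℕ) :
    ↑(u ^ m)⁻¹ * g * ↑(u ^ m) ∈ Submonoid.closure s := by
  induction m generalizing g with
  | zero => simpa using hg
  | succ m ih =>
    simpa only [pow_succ', mul_inv_rev, Units.val_mul, mul_assoc]
      using ih (u.inv_conj_mem_closure hs hg)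

end UnitConjugation

namespace SK

abbrev M := skCon.Quotient

def π : Word →* M := skCon.mk'

theorem π_eq_of_rel {u v : Word} (h : SKRel u v) : π u = π v :=
  skCon.eq.mpr (ConGen.Rel.of u v h)

theorem commute_of_rel {y w : Word} (h : SKRel (y * w) (w * y)) : Commute (π y) (π w) :=
  (map_mul π y w).symm.trans ((π_eq_of_rel h).trans (map_mul π w y))

def dUnit (i : ZMod 3) : Mˣ where
  val := π (d i)
  inv := π (b i)
  val_inv := by simpa only [map_mul, map_one] using π_eq_of_rel (.r4db i)
  inv_val := by simpa only [map_mul, map_one] using π_eq_of_rel (.r4bd i)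

@[simp] theorem π_d (i : ZMod 3) : π (d i) = dUnit i := rfl
@[simp] theorem π_b (i : ZMod 3) : π (b i) = ↑(dUnit i)⁻¹ := rfl

local notation "ε" => dUnit 0
local notation "δ" => dUnit 2

theorem dUnit_one : dUnit 1 = ε⁻¹ * δ⁻¹ := by
  have h : ε * dUnit 1 * δ = 1 := Units.ext (by simpa using π_eq_of_rel .r3)
  calc dUnit 1 = ε⁻¹ * (ε * dUnit 1 * δ) * δ⁻¹ := by group
    _ = ε⁻¹ * δ⁻¹ := by rw [h]; group

theorem π_d_one : π (d 1) = ↑(ε⁻¹ * δ⁻¹) := by rw [π_d, dUnit_one]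
theorem π_b_one : π (b 1) = ↑(δ * ε) := by rw [π_b, dUnit_one]; simp

theorem π_a_two : π (a 2) = π (a 0) * ↑(ε⁻¹ * δ⁻¹) := by
  rw [(π_eq_of_rel (.r1a 2) : π (a 2) = π (a 0 * d 1)), map_mul, π_d_one]

theorem π_c_two : π (c 2) = ↑(δ * ε) * π (c 0) := by
  rw [(π_eq_of_rel (.r1c 2) : π (c 2) = π (b 1 * c 0)), map_mul, π_b_one]

theorem π_c_one : π (c 1) = ↑δ * π (c 0) := by
  rw [(π_eq_of_rel (.r1c 0) : π (c 0) = π (b 2 * c 1)), map_mul, π_b,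
    Units.mul_inv_cancel_left]

theorem π_x_two : π (x 2) = ↑(ε * δ) * π (x 0) * ↑(ε * δ)⁻¹ := by
  rw [(π_eq_of_rel (.r2 2) : π (x 2) = π (d 0 * x 1 * b 0)), map_mul, map_mul,
    (π_eq_of_rel (.r2 1) : π (x 1) = π (d 2 * x 0 * b 2))]
  simp [mul_assoc]

def ζ : Mˣ := δ⁻¹ * ε * δ

theorem π_b_two_d_zero_d_two : π (b 2 * d 0 * d 2) = ↑ζ := by simp [ζ]

theorem inv_conj_eq_of_commute_b_one {g : M} (h : Commute g (π (b 1))) :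
    ↑δ⁻¹ * g * ↑δ = ↑ε * g * ↑ε⁻¹ := by
  rw [π_b_one] at h
  calc ↑δ⁻¹ * g * ↑δ = ↑δ⁻¹ * (g * ↑(δ * ε)) * ↑ε⁻¹ := by simp [mul_assoc]
    _ = ↑δ⁻¹ * (↑(δ * ε) * g) * ↑ε⁻¹ := by rw [h.eq]
    _ = ↑ε * g * ↑ε⁻¹ := by simp [mul_assoc]

theorem inv_conj_a_zero :
    ↑δ⁻¹ * π (a 0) * ↑δ = ↑ε * π (a 0) * ↑ε⁻¹ * ↑ε⁻¹ * ↑ζ := by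
  have h : Commute (π (a 0) * ↑ε⁻¹) (π (b 1)) := by
    simpa using commute_of_rel (.r8 0 (b 1) (.inr (.inl rfl)))
  calc ↑δ⁻¹ * π (a 0) * ↑δ = ↑δ⁻¹ * (π (a 0) * ↑ε⁻¹) * ↑δ * ↑ζ := by simp [ζ, mul_assoc]
    _ = _ := by rw [inv_conj_eq_of_commute_b_one h]; simp [mul_assoc]

theorem inv_conj_x_zero :
    ↑δ⁻¹ * π (x 0) * ↑δ = ↑ζ⁻¹ * ↑ε * ↑ε * π (x 0) * ↑ε⁻¹ * ↑ε⁻¹ * ↑ζ := by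
  have h : Commute (↑ε * π (x 0) * ↑ε⁻¹) (π (b 1)) := by
    simpa using commute_of_rel (.r10 0 (b 1) (.inr (.inl rfl)))
  calc ↑δ⁻¹ * π (x 0) * ↑δ = ↑ζ⁻¹ * (↑δ⁻¹ * (↑ε * π (x 0) * ↑ε⁻¹) * ↑δ) * ↑ζ := by
        simp [ζ, mul_assoc]
    _ = _ := by rw [inv_conj_eq_of_commute_b_one h]; simp [mul_assoc]

theorem commute_t_one_b_one : Commute ↑(ζ * ε⁻¹) (π (b 1)) := by
  have h : Commute (π (b 2 * d 0 * d 2 * b 0)) (π (b 1)) :=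
    commute_of_rel (.r9 1 (b 1) (.inr (.inl rfl)))
  simpa [ζ, mul_assoc] using h

theorem inv_conj_ζ : (↑δ⁻¹ * ↑ζ * ↑δ : M) = ↑ε * ↑ζ * ↑ε⁻¹ * ↑ε⁻¹ * ↑ζ := by
  calc (↑δ⁻¹ * ↑ζ * ↑δ : M) = ↑δ⁻¹ * ↑(ζ * ε⁻¹) * ↑δ * ↑ζ := by simp [ζ, mul_assoc]
    _ = _ := by rw [inv_conj_eq_of_commute_b_one commute_t_one_b_one]; simp [mul_assoc]

theorem inv_conj_ζ_inv : (↑δ⁻¹ * ↑ζ⁻¹ * ↑δ : M) = ↑ζ⁻¹ * ↑ε * ↑ε * ↑ζ⁻¹ * ↑ε⁻¹ := by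
  calc (↑δ⁻¹ * ↑ζ⁻¹ * ↑δ : M) = ↑ζ⁻¹ * (↑δ⁻¹ * ↑(ζ * ε⁻¹)⁻¹ * ↑δ) := by simp [ζ, mul_assoc]
    _ = _ := by
      rw [inv_conj_eq_of_commute_b_one commute_t_one_b_one.units_inv_left]; simp [mul_assoc]

theorem c_one_mul_d_two : π (c 1) * ↑δ = π (b 1) * ↑δ * π (d 1) * π (c 1) := by
  have hd2 : (↑δ : M) = π (a 0) * π (c 1) := π_eq_of_rel (.r1d 2) |>.trans (map_mul _ _ _)
  have hc1 : π (c 1) = ↑ε⁻¹ * π (c 2) := π_eq_of_rel (.r1c 1) |>.trans (map_mul _ _ _)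
  have hδ : (↑δ : M) = π (a 0) * ↑ε⁻¹ * π (c 2) := by rw [hd2, hc1, mul_assoc]
  have h8c : Commute (π (a 0) * ↑ε⁻¹) (π (c 1)) := by
    simpa using commute_of_rel (.r8 0 (c 1) (.inr (.inr (.inl rfl))))
  have h8b : Commute (π (a 0) * ↑ε⁻¹) (π (b 1)) := by
    simpa using commute_of_rel (.r8 0 (b 1) (.inr (.inl rfl)))
  have h7 : Commute (π (d 1) * π (c 1)) (π (c 2)) := by
    simpa only [map_mul] using commute_of_rel (.r7 1 (c 2) (.inl rfl))
  calc π (c 1) * ↑δ = π (a 0) * ↑ε⁻¹ * π (c 1) * π (c 2) := by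
        rw [hδ, ← mul_assoc, ← h8c.eq]
    _ = π (a 0) * ↑ε⁻¹ * π (b 1) * (π (d 1) * π (c 1) * π (c 2)) := by simp [mul_assoc]
    _ = π (b 1) * (π (a 0) * ↑ε⁻¹ * π (c 2)) * (π (d 1) * π (c 1)) := by
        rw [h7.eq, h8b.eq]; simp only [mul_assoc]
    _ = _ := by rw [← hδ]; simp only [mul_assoc]

theorem inv_conj_c_zero : (↑δ⁻¹ * π (c 0) * ↑δ : M) = ↑ζ * ↑ε⁻¹ * π (c 0) := by
  have h := c_one_mul_d_two
  rw [π_c_one, π_b_one, π_d_one] at h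
  calc (↑δ⁻¹ * π (c 0) * ↑δ : M) = ↑δ⁻¹ * ↑δ⁻¹ * (↑δ * π (c 0) * ↑δ) := by
        simp only [mul_assoc, Units.inv_mul_cancel_left]
    _ = _ := by rw [h]; simp [ζ, mul_assoc]

def core : Submonoid M :=
  Submonoid.closure {π (a 0), π (c 0), π (x 0), ↑ε, ↑ε⁻¹, ↑ζ, ↑ζ⁻¹}

theorem a_zero_mem_core : π (a 0) ∈ core := Submonoid.subset_closure (by simp)
theorem c_zero_mem_core : π (c 0) ∈ core := Submonoid.subset_closure (by simp)
theorem x_zero_mem_core : π (x 0) ∈ core := Submonoid.subset_closure (by simp)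
theorem ε_mem_core : (↑ε : M) ∈ core := Submonoid.subset_closure (by simp)
theorem ε_inv_mem_core : (↑ε⁻¹ : M) ∈ core := Submonoid.subset_closure (by simp)
theorem ζ_mem_core : (↑ζ : M) ∈ core := Submonoid.subset_closure (by simp)
theorem ζ_inv_mem_core : (↑ζ⁻¹ : M) ∈ core := Submonoid.subset_closure (by simp)

theorem inv_conj_pow_mem_core {g : M} (hg : g ∈ core) (m : ℕ) :
    ↑(δ ^ m)⁻¹ * g * ↑(δ ^ m) ∈ core := by
  refine Units.inv_conj_pow_mem_closure δ ?_ hg m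
  rintro g (rfl | rfl | rfl | rfl | rfl | rfl | rfl)
  · rw [inv_conj_a_zero]
    exact mul_mem (mul_mem (mul_mem (mul_mem ε_mem_core a_zero_mem_core) ε_inv_mem_core)
      ε_inv_mem_core) ζ_mem_core
  · rw [inv_conj_c_zero]
    exact mul_mem (mul_mem ζ_mem_core ε_inv_mem_core) c_zero_mem_core
  · rw [inv_conj_x_zero]
    exact mul_mem (mul_mem (mul_mem (mul_mem (mul_mem (mul_mem ζ_inv_mem_core ε_mem_core)
      ε_mem_core) x_zero_mem_core) ε_inv_mem_core) ε_inv_mem_core) ζ_mem_core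
  · exact ζ_mem_core
  · rw [show (↑δ⁻¹ * ↑ε⁻¹ * ↑δ : M) = ↑ζ⁻¹ by simp [ζ, mul_assoc]]
    exact ζ_inv_mem_core
  · rw [inv_conj_ζ]
    exact mul_mem (mul_mem (mul_mem (mul_mem ε_mem_core ζ_mem_core) ε_inv_mem_core)
      ε_inv_mem_core) ζ_mem_core
  · rw [inv_conj_ζ_inv]
    exact mul_mem (mul_mem (mul_mem (mul_mem ζ_inv_mem_core ε_mem_core) ε_mem_core)
      ζ_inv_mem_core) ε_inv_mem_core

def coreWords : Set Word := {a 0, b 0, c 0, x 0, b 2 * d 0 * d 2}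

theorem commute_of_mem_core {y : M} (h : ∀ w ∈ coreWords, Commute y (π w)) {g : M}
    (hg : g ∈ core) : Commute y g := by
  have hε : Commute y ↑ε := by
    simpa using (show Commute y ↑ε⁻¹ from h (b 0) (by simp [coreWords])).units_inv_right
  have hζ : Commute y ↑ζ := π_b_two_d_zero_d_two ▸ h _ (by simp [coreWords])
  induction hg using Submonoid.closure_induction with
  | mem g hg =>
    rcases hg with rfl | rfl | rfl | rfl | rfl | rfl | rfl
    · exact h _ (by simp [coreWords])
    · exact h _ (by simp [coreWords])
    · exact h _ (by simp [coreWords])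
    · exact hε
    · exact hε.units_inv_right
    · exact hζ
    · exact hζ.units_inv_right
  | one => exact Commute.one_right y
  | mul g g' _ _ hg hg' => exact hg.mul_right hg'

def tangleWords : Set (ℕ → Word) := {Xi, Eta, Sig, SigInv, Tau}

theorem word_succ_eq {U : ℕ → Word} (hU : U ∈ tangleWords) (n : ℕ) :
    U (n + 1) = d 2 ^ n * U 1 * b 2 ^ n := by
  rcases hU with rfl | rfl | rfl | rfl | rfl
  · simp [Xi, pow_succ, mul_assoc]
  · simp [Eta, pow_succ', mul_assoc]
  · simp [Sig, pow_succ', mul_assoc]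
  · simp [SigInv, pow_succ, mul_assoc]
  · rw [Tau, Tau, pow_succ (d 2), pow_succ' (b 2)]
    simp [mul_assoc]

theorem π_succ_eq_conj {U : ℕ → Word} (hU : U ∈ tangleWords) (n : ℕ) :
    π (U (n + 1)) = ↑(δ ^ n) * π (U 1) * ↑(δ ^ n)⁻¹ := by
  rw [word_succ_eq hU]
  simp

theorem π_Xi_one : π (Xi 1) = ↑(δ ^ 2) * (↑ε * π (c 0)) * ↑(δ ^ 0)⁻¹ := by
  simp [Xi, π_c_two, pow_two, mul_assoc]

theorem π_Eta_one : π (Eta 1) = ↑(δ ^ 0) * (π (a 0) * ↑ε⁻¹) * ↑(δ ^ 2)⁻¹ := by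
  simp [Eta, π_a_two, pow_two, mul_assoc]

theorem π_Sig_one : π (Sig 1) = ↑(δ ^ 2) * (↑ζ * ↑ε⁻¹) * ↑(δ ^ 2)⁻¹ := by
  simp [Sig, dUnit_one, ζ, pow_two, mul_assoc]

theorem π_Tau_one : π (Tau 1) = ↑(δ ^ 2) * (↑ζ * π (x 0) * ↑ζ⁻¹) * ↑(δ ^ 2)⁻¹ := by
  simp [Tau, π_x_two, ζ, pow_two, mul_assoc]

theorem π_a_one_b_one : π (a 1 * b 1) = π (a 0) * ↑ε⁻¹ * ↑ζ * ↑ε := by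
  rw [map_mul, (π_eq_of_rel (.r1a 1) : π (a 1) = π (a 2 * d 0)), map_mul, π_a_two, π_b_one]
  simp [ζ, mul_assoc]

theorem π_a_one_b_one_mul_c_zero : π (a 1 * b 1) * π (c 0) = ↑ε := by
  rw [map_mul, mul_assoc, ← map_mul, ← (π_eq_of_rel (.r1c 2) : π (c 2) = π (b 1 * c 0)),
    ← map_mul, ← (π_eq_of_rel (.r1d 0) : π (d 0) = π (a 1 * c 2)), π_d]

theorem commute_Xi_one : ∀ w ∈ coreWords, Commute (π (Xi 1)) (π w) := by
  have hy : π (Xi 1) = π (d 2 * c 2) := by simp [Xi]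
  have h7 : ∀ w ∈ ({c 0, x 0, b 2 * d 0 * d 2} : Set Word), Commute (π (Xi 1)) (π w) :=
    fun w hw => hy ▸ commute_of_rel (.r7 2 w hw)
  have hF : Commute (π (Xi 1)) (π (a 1 * b 1)) := by
    have hδ : Commute (π (a 1 * b 1)) ↑δ := by
      simpa using (show Commute (π (a 1 * b 1)) ↑δ⁻¹ from
        commute_of_rel (.r8 1 (b 2) (.inr (.inl rfl)))).units_inv_right
    rw [hy, map_mul]
    exact (hδ.mul_right (commute_of_rel (.r8 1 (c 2) (.inr (.inr (.inl rfl)))))).symm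
  have hε : Commute (π (Xi 1)) ↑ε := by
    rw [← π_a_one_b_one_mul_c_zero]
    exact hF.mul_right (h7 _ (.inl rfl))
  have hζ : Commute (π (Xi 1)) ↑ζ := π_b_two_d_zero_d_two ▸ h7 _ (.inr (.inr rfl))
  rintro w (rfl | rfl | rfl | rfl | rfl)
  · have ha : π (a 0) = π (a 1 * b 1) * ↑ε⁻¹ * ↑ζ⁻¹ * ↑ε := by
      simp [π_a_one_b_one, mul_assoc]
    rw [ha]
    exact ((hF.mul_right hε.units_inv_right).mul_right hζ.units_inv_right).mul_right hε
  · exact hε.units_inv_right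
  · exact h7 _ (.inl rfl)
  · exact h7 _ (.inr (.inl rfl))
  · exact h7 _ (.inr (.inr rfl))

theorem commute_Eta_one : ∀ w ∈ coreWords, Commute (π (Eta 1)) (π w) := fun w hw => by
  simpa [Eta] using commute_of_rel (.r8 2 w hw)

theorem commute_Sig_one : ∀ w ∈ coreWords, Commute (π (Sig 1)) (π w) := fun w hw => by
  rw [show π (Sig 1) = π (b 1 * d 2 * d 1 * b 2) by simp [Sig]]
  exact commute_of_rel (.r9 0 w hw)

theorem commute_SigInv_one : ∀ w ∈ coreWords, Commute (π (SigInv 1)) (π w) := fun w hw => by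
  have h : π (SigInv 1) = ↑((dUnit 1)⁻¹ * δ * dUnit 1 * δ⁻¹)⁻¹ := by simp [SigInv, mul_assoc]
  have h' : π (Sig 1) = ↑((dUnit 1)⁻¹ * δ * dUnit 1 * δ⁻¹) := by simp [Sig, mul_assoc]
  rw [h]
  exact (h' ▸ commute_Sig_one w hw).units_inv_left

theorem commute_Tau_one : ∀ w ∈ coreWords, Commute (π (Tau 1)) (π w) := fun w hw => by
  simpa [Tau] using commute_of_rel (.r10 2 w hw)

theorem commute_one {U : ℕ → Word} (hU : U ∈ tangleWords) :
    ∀ w ∈ coreWords, Commute (π (U 1)) (π w) := by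
  rcases hU with rfl | rfl | rfl | rfl | rfl
  exacts [commute_Xi_one, commute_Eta_one, commute_Sig_one, commute_SigInv_one, commute_Tau_one]

theorem skCon_mul_of_mem_core {U V : ℕ → Word} (hU : U ∈ tangleWords) (hV : V ∈ tangleWords)
    {p q : ℕ} {Z : M} (hZ : Z ∈ core) (hV₁ : π (V 1) = ↑(δ ^ p) * Z * ↑(δ ^ q)⁻¹)
    {k l : ℕ} (hk : 1 ≤ k) (hl : k + q ≤ l) :
    skCon (V k * U l) (U (l + p - q) * V k) := by
  obtain ⟨k, rfl⟩ : ∃ k', k = k' + 1 := ⟨k - 1, by omega⟩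
  obtain ⟨m, rfl⟩ : ∃ m, l = k + q + m + 1 := ⟨l - k - q - 1, by omega⟩
  rw [show k + q + m + 1 + p - q = k + p + m + 1 by omega]
  refine skCon.eq.mp (?_ : π _ = π _)
  rw [map_mul, map_mul, π_succ_eq_conj hV k, π_succ_eq_conj hU (k + q + m),
    π_succ_eq_conj hU (k + p + m), hV₁]
  exact Units.conj_mul_conj_comm δ
    (commute_of_mem_core (commute_one hU) (inv_conj_pow_mem_core hZ m)) k p q

end SK

/-- Relations φ(11)-φ(14) hold in SK, where U ranges over the five families
Xi, Eta, Sig, SigInv, Tau. -/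
theorem phi_11_14 :
    ∀ U : ℕ → Word, U ∈ ({Xi, Eta, Sig, SigInv, Tau} : Set (ℕ → Word)) →
    ∀ k l : ℕ, 1 ≤ k → 1 ≤ l →
      (k ≤ l → skCon (Xi k * U l) (U (l+2) * Xi k)) ∧
      (k + 2 ≤ l → skCon (Eta k * U l) (U (l-2) * Eta k)) ∧
      (k + 2 ≤ l → skCon (Sig k * U l) (U l * Sig k)) ∧
      (k + 2 ≤ l → skCon (Tau k * U l) (U l * Tau k)) := by
  intro U hU k l hk _
  refine ⟨fun hl => ?_, fun hl => ?_, fun hl => ?_, fun hl => ?_⟩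
  · simpa using SK.skCon_mul_of_mem_core hU (by simp [SK.tangleWords])
      (mul_mem SK.ε_mem_core SK.c_zero_mem_core) SK.π_Xi_one hk (by simpa using hl)
  · simpa using SK.skCon_mul_of_mem_core hU (by simp [SK.tangleWords])
      (mul_mem SK.a_zero_mem_core SK.ε_inv_mem_core) SK.π_Eta_one hk hl
  · simpa using SK.skCon_mul_of_mem_core hU (by simp [SK.tangleWords])
      (mul_mem SK.ζ_mem_core SK.ε_inv_mem_core) SK.π_Sig_one hk hl
  · simpa using SK.skCon_mul_of_mem_core hU (by simp [SK.tangleWords])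
      (mul_mem (mul_mem SK.ζ_mem_core SK.x_zero_mem_core) SK.ζ_inv_mem_core) SK.π_Tau_one hk hl
end
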